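/- Tightness of 2k−1 colors: Let S be the point set consisting of the k points {(i, 2i) : 0 ≤ i ≤ k−1} together with the k−1 points {(2k−i, 2i−1) : 1 ≤ i ≤ k−1}. Then every pair of points of S lies together in some bottomless rectangle containing at most k points of S. Consequently, any coloring of S in which every bottomless rectangle with at most k points is rainbow must use at least 2k−1 colors. -/

import Mathlib

/-- Membership in the bottomless rectangle `{(x,y) : a ≤ x ≤ b, y ≤ c}`. -/
def InBottomless (a b c : ℝ) (p : ℝ × ℝ) : Prop :=
  a ≤ p.1 ∧ p.1 ≤ b ∧ p.2 ≤ c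

noncomputable instance (a b c : ℝ) :
    DecidablePred (fun p : ℝ × ℝ => InBottomless a b c p) := by
  unfold InBottomless; infer_instance

/-- The witness point set: `{(i, 2i) : 0 ≤ i ≤ k-1} ∪ {(2k - i, 2i - 1) : 1 ≤ i ≤ k-1}`. -/
noncomputable def witnessSet (k : ℕ) : Finset (ℝ × ℝ) :=
  ((Finset.range k).image (fun i : ℕ => ((i : ℝ), 2 * (i : ℝ)))) ∪
  ((Finset.Icc 1 (k - 1)).image
    (fun i : ℕ => (2 * (k : ℝ) - (i : ℝ), 2 * (i : ℝ) - 1)))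

/-!
The `k` points `(i, 2i)` climb slowly to the right of the `k - 1` points `(2k - i, 2i - 1)`, which
climb to the left, and the two staircases interleave in height. A pair of points is enclosed by
the rectangle spanning their `x`-range, capped at the height of the higher one; such a rectangle
meets at most one index interval of each staircase, and the intervals together have at most `k`
elements. Hence a coloring that is rainbow on rectangles with at most `k` points is injective on
all `2k - 1` points.
-/

open Finset

def lowPt (i : ℕ) : ℝ × ℝ := ((i : ℝ), 2 * (i : ℝ))

def highPt (k i : ℕ) : ℝ × ℝ := (2 * (k : ℝ) - (i : ℝ), 2 * (i : ℝ) - 1)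

def SharedSmallRect (S : Finset (ℝ × ℝ)) (k : ℕ) (p q : ℝ × ℝ) : Prop :=
  ∃ a b c : ℝ, a ≤ b ∧ InBottomless a b c p ∧ InBottomless a b c q ∧
    (S.filter (InBottomless a b c)).card ≤ k

theorem SharedSmallRect.symm {S : Finset (ℝ × ℝ)} {k : ℕ} {p q : ℝ × ℝ}
    (h : SharedSmallRect S k p q) : SharedSmallRect S k q p := by
  obtain ⟨a, b, c, hab, hp, hq, hcard⟩ := h
  exact ⟨a, b, c, hab, hq, hp, hcard⟩

theorem injOn_of_sharedSmallRect {S : Finset (ℝ × ℝ)} {k m : ℕ} (χ : ℝ × ℝ → Fin m)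
    (hS : ∀ p ∈ S, ∀ q ∈ S, SharedSmallRect S k p q)
    (hχ : ∀ a b c : ℝ, a ≤ b → (S.filter (InBottomless a b c)).card ≤ k →
      ∀ p ∈ S.filter (InBottomless a b c), ∀ q ∈ S.filter (InBottomless a b c),
        p ≠ q → χ p ≠ χ q) :
    Set.InjOn χ S := by
  intro p hp q hq hχpq
  by_contra hpq
  obtain ⟨a, b, c, hab, hpR, hqR, hcard⟩ := hS p hp q hq
  exact hχ a b c hab hcard p (mem_filter.2 ⟨hp, hpR⟩) q (mem_filter.2 ⟨hq, hqR⟩) hpq hχpq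

theorem card_filter_image_le_of_mem_Icc {β : Type*} [DecidableEq β] (s : Finset ℕ)
    (f : ℕ → β) (P : β → Prop) [DecidablePred P] {lo hi : ℕ}
    (h : ∀ i ∈ s, P (f i) → i ∈ Icc lo hi) :
    ((s.image f).filter P).card ≤ hi + 1 - lo :=
  calc ((s.image f).filter P).card = ((s.filter (P ∘ f)).image f).card := by
        rw [filter_image]; rfl
    _ ≤ (s.filter (P ∘ f)).card := card_image_le
    _ ≤ (Icc lo hi).card := card_le_card fun i hi ↦ by
        rw [mem_filter] at hi
        exact h i hi.1 hi.2
    _ = hi + 1 - lo := Nat.card_Icc lo hi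

theorem witnessSet_eq (k : ℕ) :
    witnessSet k = (range k).image lowPt ∪ (Icc 1 (k - 1)).image (highPt k) := rfl

theorem card_witnessSet (k : ℕ) : (witnessSet k).card = 2 * k - 1 := by
  have hdisj : Disjoint ((range k).image lowPt) ((Icc 1 (k - 1)).image (highPt k)) := by
    simp only [disjoint_left, mem_image, mem_range, mem_Icc, not_exists, not_and]
    rintro _ ⟨i, hi, rfl⟩ j ⟨-, hj⟩ hji
    have hx : 2 * (k : ℝ) - j = i := congrArg Prod.fst hji
    have hi' : (i : ℝ) + 1 ≤ k := by exact_mod_cast hi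
    have hj' : (j : ℝ) + 1 ≤ k := by exact_mod_cast (show j + 1 ≤ k by omega)
    linarith
  have hlow : Set.InjOn lowPt (range k) := fun i _ j _ h ↦ by
    have hx : (i : ℝ) = j := congrArg Prod.fst h
    exact_mod_cast hx
  have hhigh : Set.InjOn (highPt k) (Icc 1 (k - 1)) := fun i _ j _ h ↦ by
    have hx : 2 * (k : ℝ) - i = 2 * k - j := congrArg Prod.fst h
    exact_mod_cast (show (i : ℝ) = j by linarith)
  rw [witnessSet_eq, card_union_of_disjoint hdisj, card_image_of_injOn hlow,
    card_image_of_injOn hhigh, card_range, Nat.card_Icc]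
  omega

theorem mem_witnessSet {k : ℕ} {p : ℝ × ℝ} :
    p ∈ witnessSet k ↔ (∃ i < k, lowPt i = p) ∨ ∃ i, 1 ≤ i ∧ i < k ∧ highPt k i = p := by
  simp only [witnessSet_eq, mem_union, mem_image, mem_range, mem_Icc, and_assoc]
  grind

section Rectangles

variable {k : ℕ} {a b c : ℝ}

theorem inBottomless_lowPt {i : ℕ} :
    InBottomless a b c (lowPt i) ↔ a ≤ i ∧ (i : ℝ) ≤ b ∧ 2 * (i : ℝ) ≤ c := Iff.rfl

theorem inBottomless_highPt {i : ℕ} :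
    InBottomless a b c (highPt k i) ↔ a ≤ 2 * k - i ∧ 2 * (k : ℝ) - i ≤ b ∧ 2 * (i : ℝ) - 1 ≤ c :=
  Iff.rfl

theorem card_filter_witnessSet_le {lo hi lo' hi' : ℕ}
    (hlow : ∀ i < k, InBottomless a b c (lowPt i) → i ∈ Icc lo hi)
    (hhigh : ∀ i ∈ Icc 1 (k - 1), InBottomless a b c (highPt k i) → i ∈ Icc lo' hi') :
    ((witnessSet k).filter (InBottomless a b c)).card ≤ (hi + 1 - lo) + (hi' + 1 - lo') := by
  rw [witnessSet_eq, filter_union]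
  refine (card_union_le _ _).trans (Nat.add_le_add ?_ ?_)
  · exact card_filter_image_le_of_mem_Icc _ _ _ fun i hi ↦ hlow i (mem_range.1 hi)
  · exact card_filter_image_le_of_mem_Icc _ _ _ hhigh

theorem sharedSmallRect_lowPt_lowPt {i j : ℕ} (hij : i ≤ j) (hj : j < k) :
    SharedSmallRect (witnessSet k) k (lowPt i) (lowPt j) := by
  have hij' : (i : ℝ) ≤ j := by exact_mod_cast hij
  have hj' : (j : ℝ) + 1 ≤ k := by exact_mod_cast hj
  refine ⟨i, j, 2 * j, hij', inBottomless_lowPt.2 ⟨le_rfl, hij', by linarith⟩,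
    inBottomless_lowPt.2 ⟨hij', le_rfl, le_rfl⟩, ?_⟩
  refine (card_filter_witnessSet_le (lo := i) (hi := j) (lo' := 1) (hi' := 0) ?_ ?_).trans ?_
  · intro l _ hl
    rw [inBottomless_lowPt] at hl
    exact mem_Icc.2 ⟨by exact_mod_cast hl.1, by exact_mod_cast hl.2.1⟩
  · intro l hl hlR
    rw [inBottomless_highPt] at hlR
    have hl' : (l : ℝ) + 1 ≤ k := by exact_mod_cast (show l + 1 ≤ k by grind)
    linarith [hlR.2.1]
  · omega

theorem sharedSmallRect_highPt_highPt {i j : ℕ} (hi : 1 ≤ i) (hij : i ≤ j) (hj : j < k) :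
    SharedSmallRect (witnessSet k) k (highPt k i) (highPt k j) := by
  have hij' : (i : ℝ) ≤ j := by exact_mod_cast hij
  refine ⟨2 * k - j, 2 * k - i, 2 * j - 1, by linarith,
    inBottomless_highPt.2 ⟨by linarith, le_rfl, by linarith⟩,
    inBottomless_highPt.2 ⟨le_rfl, by linarith, le_rfl⟩, ?_⟩
  refine (card_filter_witnessSet_le (lo := 1) (hi := 0) (lo' := i) (hi' := j) ?_ ?_).trans ?_
  · intro l hl hlR
    rw [inBottomless_lowPt] at hlR
    have hl' : (l : ℝ) + 1 ≤ k := by exact_mod_cast hl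
    have hj' : (j : ℝ) + 1 ≤ k := by exact_mod_cast hj
    linarith [hlR.2.1]
  · intro l _ hl
    rw [inBottomless_highPt] at hl
    exact mem_Icc.2 ⟨by exact_mod_cast (show (i : ℝ) ≤ l by linarith),
      by exact_mod_cast (show (l : ℝ) ≤ j by linarith)⟩
  · omega

theorem sharedSmallRect_lowPt_highPt_of_le {i j : ℕ} (hi : i < k) (hj : 1 ≤ j) (hji : j ≤ i) :
    SharedSmallRect (witnessSet k) k (lowPt i) (highPt k j) := by
  have hi' : (i : ℝ) + 1 ≤ k := by exact_mod_cast hi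
  have hji' : (j : ℝ) ≤ i := by exact_mod_cast hji
  refine ⟨i, 2 * k - j, 2 * i, by linarith,
    inBottomless_lowPt.2 ⟨le_rfl, by linarith, le_rfl⟩,
    inBottomless_highPt.2 ⟨by linarith, le_rfl, by linarith⟩, ?_⟩
  refine (card_filter_witnessSet_le (lo := i) (hi := i) (lo' := j) (hi' := i) ?_ ?_).trans ?_
  · intro l _ hl
    rw [inBottomless_lowPt] at hl
    exact mem_Icc.2 ⟨by exact_mod_cast hl.1, by exact_mod_cast (show (l : ℝ) ≤ i by linarith)⟩
  · intro l _ hl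
    rw [inBottomless_highPt] at hl
    exact mem_Icc.2 ⟨by exact_mod_cast (show (j : ℝ) ≤ l by linarith),
      Nat.lt_succ_iff.1 (by exact_mod_cast (show (l : ℝ) < i + 1 by linarith))⟩
  · omega

theorem sharedSmallRect_lowPt_highPt_of_lt {i j : ℕ} (hij : i < j) (hj : j < k) :
    SharedSmallRect (witnessSet k) k (lowPt i) (highPt k j) := by
  have hij' : (i : ℝ) + 1 ≤ j := by exact_mod_cast hij
  have hj' : (j : ℝ) + 1 ≤ k := by exact_mod_cast hj
  refine ⟨i, 2 * k - j, 2 * j - 1, by linarith,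
    inBottomless_lowPt.2 ⟨le_rfl, by linarith, by linarith⟩,
    inBottomless_highPt.2 ⟨by linarith, le_rfl, le_rfl⟩, ?_⟩
  refine (card_filter_witnessSet_le (lo := i) (hi := j - 1) (lo' := j) (hi' := j) ?_ ?_).trans ?_
  · intro l _ hl
    rw [inBottomless_lowPt] at hl
    have hlj : l < j := by exact_mod_cast (show (l : ℝ) < j by linarith)
    exact mem_Icc.2 ⟨by exact_mod_cast hl.1, by omega⟩
  · intro l _ hl
    rw [inBottomless_highPt] at hl
    exact mem_Icc.2 ⟨by exact_mod_cast (show (j : ℝ) ≤ l by linarith),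
      by exact_mod_cast (show (l : ℝ) ≤ j by linarith)⟩
  · omega

theorem sharedSmallRect_lowPt_highPt {i j : ℕ} (hi : i < k) (hj : 1 ≤ j) (hj' : j < k) :
    SharedSmallRect (witnessSet k) k (lowPt i) (highPt k j) := by
  rcases le_or_gt j i with hji | hij
  · exact sharedSmallRect_lowPt_highPt_of_le hi hj hji
  · exact sharedSmallRect_lowPt_highPt_of_lt hij hj'

end Rectangles

theorem sharedSmallRect_witnessSet {k : ℕ} {p q : ℝ × ℝ} (hp : p ∈ witnessSet k)
    (hq : q ∈ witnessSet k) : SharedSmallRect (witnessSet k) k p q := by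
  rcases mem_witnessSet.1 hp with ⟨i, hi, rfl⟩ | ⟨i, hi, hi', rfl⟩ <;>
    rcases mem_witnessSet.1 hq with ⟨j, hj, rfl⟩ | ⟨j, hj, hj', rfl⟩
  · rcases le_total i j with hij | hji
    · exact sharedSmallRect_lowPt_lowPt hij hj
    · exact (sharedSmallRect_lowPt_lowPt hji hi).symm
  · exact sharedSmallRect_lowPt_highPt hi hj hj'
  · exact (sharedSmallRect_lowPt_highPt hj hi hi').symm
  · rcases le_total i j with hij | hji
    · exact sharedSmallRect_highPt_highPt hi hij hj'
    · exact (sharedSmallRect_highPt_highPt hj hji hi').symm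

theorem two_k_minus_one_colors_needed_general (k : ℕ) :
    (∀ p ∈ witnessSet k, ∀ q ∈ witnessSet k, ∃ a b c : ℝ, a ≤ b ∧
      InBottomless a b c p ∧ InBottomless a b c q ∧
      ((witnessSet k).filter (InBottomless a b c)).card ≤ k) ∧
    (∀ m : ℕ, ∀ χ : ℝ × ℝ → Fin m,
      (∀ a b c : ℝ, a ≤ b → ((witnessSet k).filter (InBottomless a b c)).card ≤ k →
        ∀ p ∈ (witnessSet k).filter (InBottomless a b c),
          ∀ q ∈ (witnessSet k).filter (InBottomless a b c), p ≠ q → χ p ≠ χ q) →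
      2 * k - 1 ≤ m) := by
  have hpairs : ∀ p ∈ witnessSet k, ∀ q ∈ witnessSet k, SharedSmallRect (witnessSet k) k p q :=
    fun p hp q hq ↦ sharedSmallRect_witnessSet hp hq
  refine ⟨hpairs, fun m χ hχ ↦ ?_⟩
  have hinj := injOn_of_sharedSmallRect χ hpairs hχ
  simpa [card_witnessSet] using card_le_card_of_injOn χ (fun p _ ↦ mem_univ (χ p)) hinj

/-- Tightness of `2k - 1` colors: every two points of the witness set lie in a
common bottomless rectangle containing at most `k` of its points; consequently
any coloring for which every bottomless rectangle with at most `k` points is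
rainbow uses at least `2k - 1` colors. -/
theorem two_k_minus_one_colors_needed (k : ℕ) (hk : 1 ≤ k) :
    (∀ p ∈ witnessSet k, ∀ q ∈ witnessSet k, ∃ a b c : ℝ, a ≤ b ∧
      InBottomless a b c p ∧ InBottomless a b c q ∧
      ((witnessSet k).filter (InBottomless a b c)).card ≤ k) ∧
    (∀ m : ℕ, ∀ χ : ℝ × ℝ → Fin m,
      (∀ a b c : ℝ, a ≤ b → ((witnessSet k).filter (InBottomless a b c)).card ≤ k →
        ∀ p ∈ (witnessSet k).filter (InBottomless a b c),
          ∀ q ∈ (witnessSet k).filter (InBottomless a b c), p ≠ q → χ p ≠ χ q) →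
      2 * k - 1 ≤ m) :=
  two_k_minus_one_colors_needed_general k
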